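/- arXiv:2310.16101 — 3 statements merged into one kernel-verified Lean document; each statement's English description precedes it below -/
import Mathlib

section
/- If trapezoidal-rule flux approximations are used at both edges of a cell, the leading second-order error terms cancel: the flux-difference error [F^true_{i+1/2} - F^true_{i-1/2}] - [F^T_{i+1/2} - F^T_{i-1/2}] equals -(Δt²/12)(s_tt(t^n,x_{i+1/2}) - s_tt(t^n,x_{i-1/2})) + O(Δt³), which is O(Δt² h) + O(Δt³) and hence O(Δt³) when h = O(Δt). -/
open Filter Asymptotics Topology intervalIntegral


lemma idw_eq (f : ℝ → ℝ) {a b x : ℝ} (hab : a < b) (hx : x ∈ Set.Icc a b)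
    (hf : ContDiff ℝ 3 f) (m : ℕ) (hm : m ≤ 3) :
    iteratedDerivWithin m f (Set.Icc a b) x = iteratedDeriv m f x := by
  have H := (contDiff_iff_ftaylorSeries.mp hf).hasFTaylorSeriesUpToOn (Set.Icc a b)
  have h2 := H.eq_iteratedFDerivWithin_of_uniqueDiffOn (by exact_mod_cast hm)
    (uniqueDiffOn_Icc hab) hx
  rw [iteratedDerivWithin_eq_iteratedFDerivWithin, iteratedDeriv_eq_iteratedFDeriv, ← h2]
  rfl

lemma trap_edge (g : ℝ → ℝ) (a Δt M : ℝ) (hg : ContDiff ℝ 3 g)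
    (hM : ∀ t, |iteratedDeriv 3 g t| ≤ M) (hΔ : 0 < Δt) :
    |(1/Δt) * (∫ t in a..(a+Δt), g t) - (g a + g (a+Δt))/2
      + (Δt^2/12) * iteratedDeriv 2 g a| ≤ 2 * M * Δt^3 := by
  set b := a + Δt with hb
  have hab : a < b := by simp [hb]; linarith
  have hM0 : 0 ≤ M := le_trans (abs_nonneg _) (hM a)
  set c1 : ℝ := iteratedDeriv 1 g a with hc1
  set c2 : ℝ := iteratedDeriv 2 g a with hc2
  set P : ℝ → ℝ := fun x => g a + c1 * (x - a) + (c2/2) * (x - a)^2 with hP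
  -- Taylor polynomial equals P
  have hTP : taylorWithinEval g 2 (Set.Icc a b) a = P := by
    funext x
    rw [taylor_within_apply]
    simp only [Finset.sum_range_succ, Finset.sum_range_zero]
    rw [idw_eq g hab (Set.left_mem_Icc.2 hab.le) hg 0 (by norm_num),
        idw_eq g hab (Set.left_mem_Icc.2 hab.le) hg 1 (by norm_num),
        idw_eq g hab (Set.left_mem_Icc.2 hab.le) hg 2 (by norm_num)]
    simp [hP, hc1, iteratedDeriv_zero, iteratedDeriv_one, smul_eq_mul]
    ring
  -- Taylor remainder bound
  have hT : ∀ x ∈ Set.Icc a b, |g x - P x| ≤ M * Δt^3 := by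
    intro x hx
    have hbd : ∀ y ∈ Set.Icc a b, ‖iteratedDerivWithin 3 g (Set.Icc a b) y‖ ≤ M := by
      intro y hy
      rw [idw_eq g hab hy hg 3 le_rfl]
      exact hM y
    have := taylor_mean_remainder_bound (n := 2) hab.le
      (hg.contDiffOn) hx hbd
    rw [hTP] at this
    have h1 : M * (x - a)^3 / 2 ≤ M * Δt^3 := by
      have hxa : 0 ≤ x - a := by linarith [hx.1]
      have hxb : x - a ≤ Δt := by have := hx.2; simp [hb] at this ⊢; linarith
      have h3 : (x - a)^3 ≤ Δt^3 := pow_le_pow_left₀ hxa hxb 3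
      have h5 := mul_le_mul_of_nonneg_left h3 hM0
      have h4 : (0:ℝ) ≤ M * Δt^3 := by positivity
      linarith
    calc |g x - P x| ≤ M * (x - a)^3 / 2 := by simpa using this
      _ ≤ M * Δt^3 := h1
  -- integral of P
  have hcont : Continuous P := by fun_prop
  have e1 : (∫ x in a..b, (x - a)) = Δt^2/2 := by
    rw [intervalIntegral.integral_comp_sub_right (fun x => x) a]
    simp [hb, integral_id]
  have e2 : (∫ x in a..b, (x - a)^2) = Δt^3/3 := by
    rw [intervalIntegral.integral_comp_sub_right (fun x => x^2) a]
    simp [hb, integral_pow]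
    ring
  have hIP : (∫ x in a..b, P x) = Δt * g a + Δt^2/2 * c1 + Δt^3/6 * c2 := by
    have i1 : IntervalIntegrable (fun _ : ℝ => g a) MeasureTheory.volume a b :=
      intervalIntegrable_const
    have i2 : IntervalIntegrable (fun x : ℝ => c1 * (x - a)) MeasureTheory.volume a b :=
      (by fun_prop : Continuous fun x : ℝ => c1 * (x - a)).intervalIntegrable a b
    have i3 : IntervalIntegrable (fun x : ℝ => (c2/2) * (x - a)^2) MeasureTheory.volume a b :=
      (by fun_prop : Continuous fun x : ℝ => (c2/2) * (x - a)^2).intervalIntegrable a b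
    rw [hP]
    rw [intervalIntegral.integral_add (i1.add i2) i3, intervalIntegral.integral_add i1 i2,
        intervalIntegral.integral_const_mul, intervalIntegral.integral_const_mul,
        intervalIntegral.integral_const, e1, e2]
    simp [hb]
    ring
  -- integral error
  have hgint : IntervalIntegrable g MeasureTheory.volume a b :=
    hg.continuous.intervalIntegrable a b
  have hPint : IntervalIntegrable P MeasureTheory.volume a b := hcont.intervalIntegrable a b
  have hIerr : |(∫ x in a..b, g x) - ∫ x in a..b, P x| ≤ M * Δt^3 * Δt := by
    rw [← intervalIntegral.integral_sub hgint hPint]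
    have := intervalIntegral.norm_integral_le_of_norm_le_const
      (C := M * Δt^3) (f := fun x => g x - P x) (a := a) (b := b) ?_
    · calc |∫ x in a..b, (g x - P x)| ≤ M * Δt^3 * |b - a| := this
        _ = M * Δt^3 * Δt := by rw [hb]; rw [abs_of_pos]; ring_nf; linarith
    · intro x hx
      have hx' : x ∈ Set.Icc a b := by
        rw [Set.uIoc_of_le hab.le] at hx
        exact Set.mem_Icc.2 ⟨hx.1.le, hx.2⟩
      simpa using hT x hx'
  -- endpoint error
  have hRb : |g b - P b| ≤ M * Δt^3 := hT b (Set.right_mem_Icc.2 hab.le)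
  -- combine
  have hPb : P b = g a + c1 * Δt + (c2/2) * Δt^2 := by simp [hP, hb]
  have key : (1/Δt) * (∫ t in a..b, g t) - (g a + g b)/2 + (Δt^2/12) * c2
      = (1/Δt) * ((∫ t in a..b, g t) - ∫ x in a..b, P x) - (g b - P b)/2 := by
    rw [hIP, hPb]
    field_simp
    ring
  rw [key]
  have h1 : |(1/Δt) * ((∫ t in a..b, g t) - ∫ x in a..b, P x)| ≤ M * Δt^3 := by
    rw [abs_mul, abs_of_pos (by positivity : (0:ℝ) < 1/Δt)]
    calc (1/Δt) * |(∫ t in a..b, g t) - ∫ x in a..b, P x|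
        ≤ (1/Δt) * (M * Δt^3 * Δt) := by
          apply mul_le_mul_of_nonneg_left hIerr (by positivity)
      _ = M * Δt^3 := by field_simp
  calc |(1/Δt) * ((∫ t in a..b, g t) - ∫ x in a..b, P x) - (g b - P b)/2|
      ≤ |(1/Δt) * ((∫ t in a..b, g t) - ∫ x in a..b, P x)| + |(g b - P b)/2| := abs_sub _ _
    _ ≤ M * Δt^3 + M * Δt^3 := by
        refine add_le_add h1 ?_
        rw [abs_div, abs_two]
        have h3 : (0:ℝ) ≤ M * Δt^3 := by positivity
        linarith [abs_nonneg (g b - P b)]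
    _ = 2 * M * Δt^3 := by ring

/-- Using the trapezoidal flux at *both* edges of a cell, the leading
second-order error terms cancel: with `F^true(x) = (1/Δt)∫_{t^n}^{t^n+Δt} s(t,x) dt`
and `F^T(x) = (s(t^n,x)+s(t^n+Δt,x))/2`, for edges `x_{i-1/2} = x0`,
`x_{i+1/2} = x0 + h`,
`[F^true(x0+h) - F^true(x0)] - [F^T(x0+h) - F^T(x0)]
  = -(Δt²/12)(s_tt(t^n,x0+h) - s_tt(t^n,x0)) + O(Δt³)`,
which is `O(Δt²h) + O(Δt³)`, hence `O(Δt³)` whenever `h ≤ C·Δt`.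
Smoothness: `s` is C³ in time with uniformly bounded third time derivative,
and `s_tt(t^n,·)` is `K`-Lipschitz in `x`. -/
theorem trap_both_edges_flux_difference_error
    (s : ℝ → ℝ → ℝ) (tn x0 C K M : ℝ) (hC : 0 < C)
    (hs : ∀ x : ℝ, ContDiff ℝ 3 (fun t => s t x))
    (hM : ∀ x t : ℝ, |iteratedDeriv 3 (fun τ => s τ x) t| ≤ M)
    (hlip : ∀ x y : ℝ,
      |iteratedDeriv 2 (fun τ => s τ x) tn - iteratedDeriv 2 (fun τ => s τ y) tn|
        ≤ K * |x - y|) :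
    ∃ C' δ : ℝ, 0 < δ ∧ ∀ Δt : ℝ, 0 < Δt → Δt < δ → ∀ h : ℝ, 0 < h → h ≤ C * Δt →
      (|((((1/Δt) * ∫ t in tn..(tn + Δt), s t (x0 + h))
            - ((1/Δt) * ∫ t in tn..(tn + Δt), s t x0))
          - ((s tn (x0 + h) + s (tn + Δt) (x0 + h)) / 2
            - (s tn x0 + s (tn + Δt) x0) / 2))
        + (Δt^2/12) * (iteratedDeriv 2 (fun τ => s τ (x0 + h)) tn
            - iteratedDeriv 2 (fun τ => s τ x0) tn)| ≤ C' * Δt^3)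
      ∧
      (|(((1/Δt) * ∫ t in tn..(tn + Δt), s t (x0 + h))
            - ((1/Δt) * ∫ t in tn..(tn + Δt), s t x0))
          - ((s tn (x0 + h) + s (tn + Δt) (x0 + h)) / 2
            - (s tn x0 + s (tn + Δt) x0) / 2)| ≤ C' * Δt^3) := by
  have hM0 : 0 ≤ M := le_trans (abs_nonneg _) (hM x0 tn)
  have hK0 : 0 ≤ K := by
    have := hlip (x0 + 1) x0
    simp at this
    exact le_trans (abs_nonneg _) this
  refine ⟨4 * M + K * C, 1, one_pos, fun Δt hΔ hΔ1 h hh hhC => ?_⟩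
  have h1 := trap_edge (fun t => s t (x0 + h)) tn Δt M (hs _) (fun t => hM _ t) hΔ
  have h0 := trap_edge (fun t => s t x0) tn Δt M (hs _) (fun t => hM _ t) hΔ
  set T1 : ℝ := (1/Δt) * (∫ t in tn..(tn + Δt), s t (x0 + h))
      - (s tn (x0 + h) + s (tn + Δt) (x0 + h))/2
      + (Δt^2/12) * iteratedDeriv 2 (fun τ => s τ (x0 + h)) tn with hT1
  set T0 : ℝ := (1/Δt) * (∫ t in tn..(tn + Δt), s t x0)
      - (s tn x0 + s (tn + Δt) x0)/2
      + (Δt^2/12) * iteratedDeriv 2 (fun τ => s τ x0) tn with hT0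
  have hb1 : |T1| ≤ 2 * M * Δt^3 := h1
  have hb0 : |T0| ≤ 2 * M * Δt^3 := h0
  have hΔ3 : (0:ℝ) < Δt^3 := by positivity
  have hKC : 0 ≤ K * C * Δt^3 := by positivity
  constructor
  · have heq : ((((1/Δt) * ∫ t in tn..(tn + Δt), s t (x0 + h))
            - ((1/Δt) * ∫ t in tn..(tn + Δt), s t x0))
          - ((s tn (x0 + h) + s (tn + Δt) (x0 + h)) / 2
            - (s tn x0 + s (tn + Δt) x0) / 2))
        + (Δt^2/12) * (iteratedDeriv 2 (fun τ => s τ (x0 + h)) tn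
            - iteratedDeriv 2 (fun τ => s τ x0) tn) = T1 - T0 := by
      rw [hT1, hT0]; ring
    rw [heq]
    calc |T1 - T0| ≤ |T1| + |T0| := abs_sub _ _
      _ ≤ 2 * M * Δt^3 + 2 * M * Δt^3 := add_le_add hb1 hb0
      _ ≤ (4 * M + K * C) * Δt^3 := by nlinarith
  · have heq : (((1/Δt) * ∫ t in tn..(tn + Δt), s t (x0 + h))
            - ((1/Δt) * ∫ t in tn..(tn + Δt), s t x0))
          - ((s tn (x0 + h) + s (tn + Δt) (x0 + h)) / 2
            - (s tn x0 + s (tn + Δt) x0) / 2)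
        = (T1 - T0) - (Δt^2/12) * (iteratedDeriv 2 (fun τ => s τ (x0 + h)) tn
            - iteratedDeriv 2 (fun τ => s τ x0) tn) := by
      rw [hT1, hT0]; ring
    rw [heq]
    have hlipb : |iteratedDeriv 2 (fun τ => s τ (x0 + h)) tn
        - iteratedDeriv 2 (fun τ => s τ x0) tn| ≤ K * (C * Δt) := by
      have := hlip (x0 + h) x0
      simp only [add_sub_cancel_left] at this
      rw [abs_of_pos hh] at this
      exact this.trans (mul_le_mul_of_nonneg_left hhC hK0)
    calc |(T1 - T0) - (Δt^2/12) * (iteratedDeriv 2 (fun τ => s τ (x0 + h)) tn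
            - iteratedDeriv 2 (fun τ => s τ x0) tn)|
        ≤ |T1 - T0| + |(Δt^2/12) * (iteratedDeriv 2 (fun τ => s τ (x0 + h)) tn
            - iteratedDeriv 2 (fun τ => s τ x0) tn)| := abs_sub _ _
      _ ≤ (|T1| + |T0|) + (Δt^2/12) * (K * (C * Δt)) := by
          refine add_le_add (abs_sub _ _) ?_
          rw [abs_mul, abs_of_pos (by positivity : (0:ℝ) < Δt^2/12)]
          exact mul_le_mul_of_nonneg_left hlipb (by positivity)
      _ ≤ (2 * M * Δt^3 + 2 * M * Δt^3) + (Δt^2/12) * (K * (C * Δt)) := by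
          have := add_le_add hb1 hb0; linarith
      _ ≤ (4 * M + K * C) * Δt^3 := by nlinarith
end

section
/- On a uniform mesh, the one-step error of the mixed MUSCL–Trapezoidal scheme with forward-difference slopes satisfies, for a smooth solution of s_t + u s_x = 0: L_{-1} = -(λ³/4)h² s_xx(t^n,x_{-1}) + O(h³) on the transition cell upstream of the implicit cell, L_0 = O(h³) on the implicit cell, and L_1 = +(λ³/4)h² s_xx(t^n,x_1) + O(h³) on the downstream transition cell; in particular the leading second-order errors on cells -1 and 1 are negatives of each other up to O(h) perturbation. -/
open Filter Asymptotics Topology intervalIntegral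

open scoped ContDiff in
private lemma aux_isBigO_of_deriv' {R : ℝ → ℝ} {n : ℕ}
    (hd : Differentiable ℝ R) (h0 : R 0 = 0)
    (hO : (fun h => deriv R h) =O[𝓝 (0:ℝ)] fun h => h ^ n) :
    R =O[𝓝 (0:ℝ)] fun h => h ^ (n + 1) := by
  obtain ⟨C, hCpos, hC⟩ := hO.exists_pos
  rw [IsBigOWith] at hC
  rw [Metric.eventually_nhds_iff] at hC
  obtain ⟨ε, hε, hball⟩ := hC
  rw [isBigO_iff]
  refine ⟨C, ?_⟩
  rw [Metric.eventually_nhds_iff]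
  refine ⟨ε, hε, fun {h} hh => ?_⟩
  have hh' : |h| < ε := by simpa [Real.dist_eq] using hh
  have key : ∀ x ∈ Set.Icc (-|h|) |h|, ‖deriv R x‖ ≤ C * |h| ^ n := by
    intro x hx
    have hxh : |x| ≤ |h| := abs_le.2 ⟨hx.1, hx.2⟩
    have hdx : dist x 0 < ε := by
      simp only [Real.dist_eq, sub_zero]
      exact lt_of_le_of_lt hxh hh'
    calc ‖deriv R x‖ ≤ C * ‖x ^ n‖ := hball hdx
      _ ≤ C * |h| ^ n := by
          rw [Real.norm_eq_abs, abs_pow]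
          exact mul_le_mul_of_nonneg_left (pow_le_pow_left₀ (abs_nonneg x) hxh n) hCpos.le
  have hmvt := (convex_Icc (-|h|) |h|).norm_image_sub_le_of_norm_deriv_le
    (fun x _ => hd x) key
    (Set.mem_Icc.2 ⟨neg_nonpos.2 (abs_nonneg h), abs_nonneg h⟩)
    (Set.mem_Icc.2 ⟨neg_abs_le h, le_abs_self h⟩)
  rw [h0, sub_zero, sub_zero] at hmvt
  calc ‖R h‖ ≤ C * |h| ^ n * ‖h‖ := hmvt
    _ = C * ‖h ^ (n+1)‖ := by
        rw [Real.norm_eq_abs, Real.norm_eq_abs, abs_pow, pow_succ]; ring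

open scoped ContDiff in
private lemma taylor_remainder_isBigO' (n : ℕ) :
    ∀ g : ℝ → ℝ, ContDiff ℝ ∞ g →
    (fun h : ℝ => g h - ∑ k ∈ Finset.range (n+1),
        iteratedDeriv k g 0 * h ^ k / (Nat.factorial k)) =O[𝓝 (0:ℝ)] fun h => h ^ (n+1) := by
  have h1le : (1 : WithTop ℕ∞) ≤ ∞ := by exact_mod_cast le_top
  induction n with
  | zero =>
    intro g hg
    have h1 := ((hg.differentiable (by simp)) 0).isBigO_sub
    have e1 : (fun h : ℝ => g h - ∑ k ∈ Finset.range (0+1),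
        iteratedDeriv k g 0 * h ^ k / (Nat.factorial k)) = fun h => g h - g 0 := by
      funext h; simp
    have e2 : (fun h : ℝ => h ^ (0+1)) = fun h : ℝ => h - 0 := by funext h; ring
    rw [e1, e2]; exact h1
  | succ n IH =>
    intro g hg
    have hg' : ContDiff ℝ ∞ (deriv g) := (contDiff_infty_iff_deriv.mp hg).2
    have hgd : Differentiable ℝ g := hg.differentiable (by simp)
    set c : ℕ → ℝ := fun k => iteratedDeriv k g 0 with hc
    have hsumder : ∀ h : ℝ, HasDerivAt
        (fun h : ℝ => ∑ k ∈ Finset.range (n+2), c k * h ^ k / (Nat.factorial k))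
        (∑ k ∈ Finset.range (n+2), c k * ((k : ℝ) * h ^ (k-1)) / (Nat.factorial k)) h := by
      intro h
      apply HasDerivAt.fun_sum
      intro k _
      exact ((hasDerivAt_pow k h).const_mul (c k)).div_const _
    have hRd : Differentiable ℝ (fun h : ℝ => g h - ∑ k ∈ Finset.range (n+2),
        c k * h ^ k / (Nat.factorial k)) :=
      hgd.sub fun h => ((hsumder h).differentiableAt)
    apply aux_isBigO_of_deriv' hRd
    · simp only [sub_eq_zero]
      rw [Finset.sum_range_succ']
      simp [hc]
    · have hder : ∀ h : ℝ, deriv (fun h : ℝ => g h - ∑ k ∈ Finset.range (n+2),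
          c k * h ^ k / (Nat.factorial k)) h
          = deriv g h - ∑ k ∈ Finset.range (n+1),
              iteratedDeriv k (deriv g) 0 * h ^ k / (Nat.factorial k) := by
        intro h
        rw [deriv_fun_sub (hgd h) ((hsumder h).differentiableAt),
          (hsumder h).deriv]
        congr 1
        rw [Finset.sum_range_succ']
        simp only [Nat.cast_zero, pow_zero, Nat.factorial_zero, Nat.cast_one, zero_mul,
          mul_zero, zero_div, add_zero]
        apply Finset.sum_congr rfl
        intro k _
        rw [← iteratedDeriv_succ']
        simp only [hc, Nat.add_sub_cancel, Nat.factorial_succ]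
        push_cast
        have hkf : (Nat.factorial k : ℝ) ≠ 0 := Nat.cast_ne_zero.2 (Nat.factorial_ne_zero k)
        field_simp
      have := IH (deriv g) hg'
      apply IsBigO.congr' this _ (EventuallyEq.refl _ _)
      exact Eventually.of_forall fun h => (hder h).symm

open scoped ContDiff in
private lemma taylor4_shift' (g : ℝ → ℝ) (hg : ContDiff ℝ ∞ g) (x0 c : ℝ) :
    (fun h : ℝ => g (x0 + c * h) - (g x0 + iteratedDeriv 1 g x0 * (c*h)
      + iteratedDeriv 2 g x0 * (c*h)^2 / 2 + iteratedDeriv 3 g x0 * (c*h)^3 / 6))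
      =O[𝓝 (0:ℝ)] fun h => h ^ 4 := by
  have hψ : ContDiff ℝ ∞ (fun t : ℝ => g (x0 + t)) :=
    hg.comp (contDiff_const.add contDiff_id)
  have H := taylor_remainder_isBigO' 3 (fun t => g (x0 + t)) hψ
  have htend : Filter.Tendsto (fun h : ℝ => c * h) (𝓝 0) (𝓝 0) := by
    simpa using (continuous_mul_left c).tendsto (0:ℝ)
  have hcomp := H.comp_tendsto htend
  have hiter : ∀ k, iteratedDeriv k (fun t : ℝ => g (x0 + t)) 0 = iteratedDeriv k g x0 := by
    intro k
    rw [iteratedDeriv_comp_const_add]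
    simp
  have e1 : ((fun h : ℝ => (fun t => g (x0 + t)) h - ∑ k ∈ Finset.range (3+1),
      iteratedDeriv k (fun t : ℝ => g (x0 + t)) 0 * h ^ k / (Nat.factorial k))
        ∘ (fun h : ℝ => c * h))
      = fun h : ℝ => g (x0 + c * h) - (g x0 + iteratedDeriv 1 g x0 * (c*h)
        + iteratedDeriv 2 g x0 * (c*h)^2 / 2 + iteratedDeriv 3 g x0 * (c*h)^3 / 6) := by
    funext h
    simp only [Function.comp_apply, Finset.sum_range_succ, Finset.sum_range_zero, hiter]
    simp [Nat.factorial]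
    try ring
  rw [e1] at hcomp
  have e2 : ((fun h : ℝ => h ^ (3+1)) ∘ (fun h : ℝ => c * h)) = fun h : ℝ => c^4 * h^4 := by
    funext h; simp [Function.comp]; ring
  rw [e2] at hcomp
  exact hcomp.trans ((isBigO_refl (fun h : ℝ => h^4) (𝓝 0)).const_mul_left (c^4))

/-- Exact cell average of `s(t,·)` over the cell of width `h` centered at `x`. -/
noncomputable def cellAvg (s : ℝ → ℝ → ℝ) (h t x : ℝ) : ℝ :=
  (1/h) * ∫ y in (x - h/2)..(x + h/2), s t y

/-- One-step error on cell `i` (center `x0 + i·h`) of the mixed MUSCL–Trapezoidal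
scheme on a uniform mesh with forward-difference slopes, applied to the exact cell
averages of `s` at `t^n` and `t^{n+1} = t^n + Δt`, `Δt = λh/u`.  The trapezoidal
flux is used at the edges `-1/2` and `1/2` (around the implicitly treated cell `0`)
and the MUSCL flux elsewhere. -/
noncomputable def mixedOneStepError (s : ℝ → ℝ → ℝ) (u lam tn x0 h : ℝ) (i : ℤ) : ℝ :=
  let Δt := lam * h / u
  let tnp := tn + Δt
  let A := fun (t : ℝ) (j : ℤ) => cellAvg s h t (x0 + (j : ℝ) * h)
  let σ := fun (t : ℝ) (j : ℤ) => (A t (j+1) - A t j) / h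
  let FM := fun (j : ℤ) => u * (A tn j + (1 - lam) * σ tn j * (h/2))
  let FT := fun (j : ℤ) =>
    (u/2) * (A tn j + σ tn j * (h/2) + A tnp j + σ tnp j * (h/2))
  let flux := fun (j : ℤ) => if j = -1 ∨ j = 0 then FT j else FM j
  A tn i - (Δt / h) * (flux i - flux (i-1)) - A tnp i

open scoped ContDiff in
set_option maxHeartbeats 4000000 in
/-- On a uniform mesh, the one-step error of the mixed
MUSCL–Trapezoidal scheme with forward-difference slopes satisfies, for a smooth
solution of `s_t + u s_x = 0`:
`L_{-1} = -(λ³/4)h² s_xx(t^n,x_{-1}) + O(h³)` on the upstream transition cell,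
`L_0 = O(h³)` on the implicit cell, and
`L_1 = +(λ³/4)h² s_xx(t^n,x_1) + O(h³)` on the downstream transition cell;
in particular the leading second-order errors on cells `-1` and `1` are negatives
of each other up to an `O(h)` perturbation. -/
theorem mixed_muscl_trap_one_step_errors_uniform
    (s : ℝ → ℝ → ℝ) (u lam tn x0 : ℝ) (hu : 0 < u)
    (hlam : lam ∈ Set.Ioc (0:ℝ) 1)
    (hs : ContDiff ℝ (⊤ : ℕ∞) (Function.uncurry s))
    (hpde : ∀ t x : ℝ, deriv (fun τ => s τ x) t + u * deriv (fun y => s t y) x = 0) :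
    ((fun h : ℝ => mixedOneStepError s u lam tn x0 h (-1)
        + (lam^3/4) * h^2 * iteratedDeriv 2 (s tn) (x0 - h))
        =O[𝓝[>] (0:ℝ)] (fun h => h^3))
    ∧ ((fun h : ℝ => mixedOneStepError s u lam tn x0 h 0)
        =O[𝓝[>] (0:ℝ)] (fun h => h^3))
    ∧ ((fun h : ℝ => mixedOneStepError s u lam tn x0 h 1
        - (lam^3/4) * h^2 * iteratedDeriv 2 (s tn) (x0 + h))
        =O[𝓝[>] (0:ℝ)] (fun h => h^3)) := by
  have hune : u ≠ 0 := ne_of_gt hu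
  have hsd : Differentiable ℝ (Function.uncurry s) :=
    (hs.of_le (by exact_mod_cast le_top : (1 : WithTop ℕ∞) ≤ ∞)).differentiable (by simp)
  -- representation via characteristics
  have hrep : ∀ t x : ℝ, s t x = s tn (x - u * (t - tn)) := by
    intro t x
    set y := x - u * (t - tn) with hy
    have key : ∀ τ : ℝ, HasDerivAt (fun τ => s τ (y + u * (τ - tn))) 0 τ := by
      intro τ
      set p : ℝ × ℝ := (τ, y + u * (τ - tn)) with hp
      set L := fderiv ℝ (Function.uncurry s) p with hL
      have hdiff : HasFDerivAt (Function.uncurry s) L p := (hsd p).hasFDerivAt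
      have hγ : HasDerivAt (fun τ : ℝ => (τ, y + u * (τ - tn))) ((1:ℝ), u) τ := by
        apply HasDerivAt.prodMk (hasDerivAt_id τ)
        simpa using (((hasDerivAt_id τ).sub_const tn).const_mul u).const_add y
      have hcomp := hdiff.comp_hasDerivAt τ hγ
      have h1 : HasDerivAt (fun τ' => s τ' p.2) (L (1, 0)) p.1 := by
        have hγ1 : HasDerivAt (fun τ' : ℝ => (τ', p.2)) ((1:ℝ), (0:ℝ)) p.1 :=
          (hasDerivAt_id _).prodMk (hasDerivAt_const _ _)
        have h := hdiff.comp_hasDerivAt p.1 hγ1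
        exact h
      have h2 : HasDerivAt (fun x' => s p.1 x') (L (0, 1)) p.2 := by
        have hγ2 : HasDerivAt (fun x' : ℝ => (p.1, x')) ((0:ℝ), (1:ℝ)) p.2 :=
          (hasDerivAt_const _ _).prodMk (hasDerivAt_id _)
        have h := hdiff.comp_hasDerivAt p.2 hγ2
        exact h
      have hzero : L (1, 0) + u * L (0, 1) = 0 := by
        rw [← h1.deriv, ← h2.deriv]
        exact hpde p.1 p.2
      have hval : L (1, u) = 0 := by
        have he : ((1:ℝ), u) = ((1:ℝ), (0:ℝ)) + u • ((0:ℝ), (1:ℝ)) := by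
          simp [Prod.ext_iff]
        rw [he, map_add, map_smul]
        simpa [smul_eq_mul] using hzero
      have hfe : (fun τ' : ℝ => s τ' (y + u * (τ' - tn)))
          = (Function.uncurry s) ∘ (fun τ' : ℝ => (τ', y + u * (τ' - tn))) := rfl
      rw [hfe, ← hval]
      exact hcomp
    have hconst : (fun τ => s τ (y + u * (τ - tn))) t = (fun τ => s τ (y + u * (τ - tn))) tn :=
      is_const_of_deriv_eq_zero (fun τ => (key τ).differentiableAt)
        (fun τ => (key τ).deriv) t tn
    have hxy : y + u * (t - tn) = x := by rw [hy]; ring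
    have h2 : y + u * (tn - tn) = y := by ring
    simpa [hxy, h2] using hconst
  -- smoothness of the profile and its primitive
  have hfC : ContDiff ℝ ∞ (s tn) := by
    have := (hs.of_le ((le_refl _) : (∞ : WithTop ℕ∞) ≤ ∞)).comp
      ((contDiff_const (c := tn)).prodMk contDiff_id)
    exact this
  have hfc : Continuous (s tn) := hfC.continuous
  set F : ℝ → ℝ := fun y => ∫ z in x0..y, s tn z with hFdef
  have hFd : ∀ y, HasDerivAt F (s tn y) y := by
    intro y
    have hm : StronglyMeasurableAtFilter (s tn) (𝓝 y) MeasureTheory.volume :=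
      hfc.aestronglyMeasurable.stronglyMeasurableAtFilter
    exact intervalIntegral.integral_hasDerivAt_right (hfc.intervalIntegrable _ _)
      hm hfc.continuousAt
  have hFderiv : deriv F = s tn := funext fun y => (hFd y).deriv
  have hFC : ContDiff ℝ ∞ F := contDiff_infty_iff_deriv.mpr
    ⟨fun y => (hFd y).differentiableAt, hFderiv ▸ hfC⟩
  have hint : ∀ a b : ℝ, (∫ y in a..b, s tn y) = F b - F a := by
    intro a b
    have h1 := intervalIntegral.integral_add_adjacent_intervals (μ := MeasureTheory.volume)
      (hfc.intervalIntegrable x0 a) (hfc.intervalIntegrable a b)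
    simp only [hFdef]
    linarith
  have hshift : ∀ h a b : ℝ, (∫ y in a..b, s (tn + lam * h / u) y)
      = F (b - lam*h) - F (a - lam*h) := by
    intro h a b
    have harg : ∀ y : ℝ, s (tn + lam * h / u) y = s tn (y - lam * h) := by
      intro y
      rw [hrep (tn + lam * h / u) y]
      congr 1
      field_simp
      ring
    rw [intervalIntegral.integral_congr (g := fun y => s tn (y - lam*h))
      (fun y _ => harg y)]
    rw [intervalIntegral.integral_comp_sub_right (fun z => s tn z) (lam*h)]
    exact hint _ _
  -- Taylor remainder
  set Rem : ℝ → ℝ → ℝ := fun c h => F (x0 + c*h) - (F x0 + iteratedDeriv 1 F x0 * (c*h)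
      + iteratedDeriv 2 F x0 * (c*h)^2 / 2 + iteratedDeriv 3 F x0 * (c*h)^3 / 6)
    with hRemdef
  have hRemO : ∀ c : ℝ, (fun h => Rem c h) =O[𝓝 (0:ℝ)] fun h => h ^ 4 := by
    intro c
    simp only [hRemdef]
    exact taylor4_shift' F hFC x0 c
  have hD3 : iteratedDeriv 3 F = iteratedDeriv 2 (s tn) := by
    rw [show (3:ℕ) = 2+1 from rfl, iteratedDeriv_succ', hFderiv]
  -- second derivative of profile is Lipschitz-ish near x0
  have hf2C : ContDiff ℝ ∞ (iteratedDeriv 2 (s tn)) := by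
    rw [iteratedDeriv_eq_iterate]
    exact ContDiff.iterate_deriv 2 hfC
  -- generic bound for the remainder combination divided by h
  have hdiv : ∀ S : ℝ → ℝ, S =O[𝓝 (0:ℝ)] (fun h => h^4) →
      (fun h : ℝ => (1/h) * S h) =O[𝓝[>] (0:ℝ)] fun h => h^3 := by
    intro S hS
    have h1 : (fun h : ℝ => (1/h) * S h) =O[𝓝[>] (0:ℝ)] fun h => (1/h) * h^4 :=
      (isBigO_refl (fun h : ℝ => 1/h) _).mul (hS.mono nhdsWithin_le_nhds)
    refine h1.trans (Filter.EventuallyEq.isBigO ?_)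
    filter_upwards [self_mem_nhdsWithin] with h hh
    have : h ≠ 0 := ne_of_gt hh
    field_simp
  -- bound for the perturbation of the second derivative at shifted points
  have hpert : ∀ c : ℝ, (fun h : ℝ => (lam^3/4) * h^2 *
      (iteratedDeriv 2 (s tn) (x0 + c*h) - iteratedDeriv 2 (s tn) x0))
      =O[𝓝[>] (0:ℝ)] fun h => h^3 := by
    intro c
    have hd2 : Differentiable ℝ (iteratedDeriv 2 (s tn)) :=
      hf2C.differentiable (by simp)
    have hdAt : DifferentiableAt ℝ (fun h : ℝ => iteratedDeriv 2 (s tn) (x0 + c*h)) 0 := by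
      exact DifferentiableAt.comp 0 (hd2 _) (by fun_prop)
    have h0 := hdAt.isBigO_sub
    simp only [mul_zero, add_zero, sub_zero] at h0
    have h1 := ((isBigO_refl (fun h : ℝ => h^2) (𝓝 (0:ℝ))).mul h0).const_mul_left (lam^3/4)
    have h2 : (fun h : ℝ => lam^3/4 * (h^2 * (iteratedDeriv 2 (s tn) (x0 + c*h)
        - iteratedDeriv 2 (s tn) x0))) = fun h : ℝ => (lam^3/4) * h^2 *
        (iteratedDeriv 2 (s tn) (x0 + c*h) - iteratedDeriv 2 (s tn) x0) := by
      funext h; ring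
    rw [h2] at h1
    have h3 : (fun h : ℝ => h^2 * h) = fun h : ℝ => h^3 := by funext h; ring
    rw [h3] at h1
    exact h1.mono nhdsWithin_le_nhds
  refine ⟨?_, ?_, ?_⟩
  · -- cell -1
    have key : ∀ h : ℝ, 0 < h →
        mixedOneStepError s u lam tn x0 h (-1)
          = -(lam^3/4) * iteratedDeriv 3 F x0 * h^2
            + (1/h) * ( (-(lam/2) - lam^2/2) * Rem (-5/2) h
                      + (1 + lam/4) * Rem (-3/2 - lam) h
                      + (-1 + lam/4 + lam^2) * Rem (-3/2) h
                      + (-1) * Rem (-1/2 - lam) h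
                      + (1 + lam/2 - lam^2/2) * Rem (-1/2) h
                      + (-(lam/4)) * Rem (1/2 - lam) h
                      + (-(lam/4)) * Rem (1/2) h ) := by
      intro h hh
      have hne : h ≠ 0 := ne_of_gt hh
      simp only [mixedOneStepError, cellAvg]
      norm_num
      simp only [hint, hshift, hRemdef]
      field_simp
      ring_nf
    have hS : (fun h : ℝ => (-(lam/2) - lam^2/2) * Rem (-5/2) h
        + (1 + lam/4) * Rem (-3/2 - lam) h
        + (-1 + lam/4 + lam^2) * Rem (-3/2) h
        + (-1) * Rem (-1/2 - lam) h
        + (1 + lam/2 - lam^2/2) * Rem (-1/2) h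
        + (-(lam/4)) * Rem (1/2 - lam) h
        + (-(lam/4)) * Rem (1/2) h) =O[𝓝 (0:ℝ)] fun h => h^4 := by
      exact ((((((((hRemO _).const_mul_left _).add
        ((hRemO _).const_mul_left _)).add
        ((hRemO _).const_mul_left _)).add
        ((hRemO _).const_mul_left _)).add
        ((hRemO _).const_mul_left _)).add
        ((hRemO _).const_mul_left _)).add
        ((hRemO _).const_mul_left _))
    have hev : (fun h : ℝ => mixedOneStepError s u lam tn x0 h (-1)
        + (lam^3/4) * h^2 * iteratedDeriv 2 (s tn) (x0 - h))
        =ᶠ[𝓝[>] (0:ℝ)] (fun h : ℝ =>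
          ((lam^3/4) * h^2 * (iteratedDeriv 2 (s tn) (x0 + (-1)*h)
            - iteratedDeriv 2 (s tn) x0))
          + (1/h) * ( (-(lam/2) - lam^2/2) * Rem (-5/2) h
                    + (1 + lam/4) * Rem (-3/2 - lam) h
                    + (-1 + lam/4 + lam^2) * Rem (-3/2) h
                    + (-1) * Rem (-1/2 - lam) h
                    + (1 + lam/2 - lam^2/2) * Rem (-1/2) h
                    + (-(lam/4)) * Rem (1/2 - lam) h
                    + (-(lam/4)) * Rem (1/2) h )) := by
      filter_upwards [self_mem_nhdsWithin] with h hh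
      rw [key h hh]
      have hx : x0 + (-1)*h = x0 - h := by ring
      rw [hx, ← hD3]
      ring
    exact hev.trans_isBigO ((hpert (-1)).add (hdiv _ hS))
  · -- cell 0
    have key : ∀ h : ℝ, 0 < h →
        mixedOneStepError s u lam tn x0 h 0
          = (1/h) * ( (-(lam/4)) * Rem (-3/2 - lam) h
                    + (-(lam/4)) * Rem (-3/2) h
                    + (1 + lam/4) * Rem (-1/2 - lam) h
                    + (-1 + lam/4) * Rem (-1/2) h
                    + (-1 + lam/4) * Rem (1/2 - lam) h
                    + (1 + lam/4) * Rem (1/2) h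
                    + (-(lam/4)) * Rem (3/2 - lam) h
                    + (-(lam/4)) * Rem (3/2) h ) := by
      intro h hh
      have hne : h ≠ 0 := ne_of_gt hh
      simp only [mixedOneStepError, cellAvg]
      norm_num
      simp only [hint, hshift, hRemdef]
      field_simp
      ring_nf
    have hS : (fun h : ℝ => (-(lam/4)) * Rem (-3/2 - lam) h
        + (-(lam/4)) * Rem (-3/2) h
        + (1 + lam/4) * Rem (-1/2 - lam) h
        + (-1 + lam/4) * Rem (-1/2) h
        + (-1 + lam/4) * Rem (1/2 - lam) h
        + (1 + lam/4) * Rem (1/2) h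
        + (-(lam/4)) * Rem (3/2 - lam) h
        + (-(lam/4)) * Rem (3/2) h) =O[𝓝 (0:ℝ)] fun h => h^4 := by
      exact (((((((((hRemO _).const_mul_left _).add
        ((hRemO _).const_mul_left _)).add
        ((hRemO _).const_mul_left _)).add
        ((hRemO _).const_mul_left _)).add
        ((hRemO _).const_mul_left _)).add
        ((hRemO _).const_mul_left _)).add
        ((hRemO _).const_mul_left _)).add
        ((hRemO _).const_mul_left _))
    have hev : (fun h : ℝ => mixedOneStepError s u lam tn x0 h 0)
        =ᶠ[𝓝[>] (0:ℝ)] (fun h : ℝ =>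
          (1/h) * ( (-(lam/4)) * Rem (-3/2 - lam) h
                  + (-(lam/4)) * Rem (-3/2) h
                  + (1 + lam/4) * Rem (-1/2 - lam) h
                  + (-1 + lam/4) * Rem (-1/2) h
                  + (-1 + lam/4) * Rem (1/2 - lam) h
                  + (1 + lam/4) * Rem (1/2) h
                  + (-(lam/4)) * Rem (3/2 - lam) h
                  + (-(lam/4)) * Rem (3/2) h )) := by
      filter_upwards [self_mem_nhdsWithin] with h hh
      exact key h hh
    exact hev.trans_isBigO (hdiv _ hS)
  · -- cell 1
    have key : ∀ h : ℝ, 0 < h →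
        mixedOneStepError s u lam tn x0 h 1
          = (lam^3/4) * iteratedDeriv 3 F x0 * h^2
            + (1/h) * ( (-(lam/4)) * Rem (-1/2 - lam) h
                      + (-(lam/4)) * Rem (-1/2) h
                      + (1 : ℝ) * Rem (1/2 - lam) h
                      + (-1 + lam/2 + lam^2/2) * Rem (1/2) h
                      + (-1 + lam/4) * Rem (3/2 - lam) h
                      + (1 + lam/4 - lam^2) * Rem (3/2) h
                      + (-(lam/2) + lam^2/2) * Rem (5/2) h ) := by
      intro h hh
      have hne : h ≠ 0 := ne_of_gt hh
      simp only [mixedOneStepError, cellAvg]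
      norm_num
      simp only [hint, hshift, hRemdef]
      field_simp
      ring_nf
    have hS : (fun h : ℝ => (-(lam/4)) * Rem (-1/2 - lam) h
        + (-(lam/4)) * Rem (-1/2) h
        + (1 : ℝ) * Rem (1/2 - lam) h
        + (-1 + lam/2 + lam^2/2) * Rem (1/2) h
        + (-1 + lam/4) * Rem (3/2 - lam) h
        + (1 + lam/4 - lam^2) * Rem (3/2) h
        + (-(lam/2) + lam^2/2) * Rem (5/2) h) =O[𝓝 (0:ℝ)] fun h => h^4 := by
      exact ((((((((hRemO _).const_mul_left _).add
        ((hRemO _).const_mul_left _)).add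
        ((hRemO _).const_mul_left _)).add
        ((hRemO _).const_mul_left _)).add
        ((hRemO _).const_mul_left _)).add
        ((hRemO _).const_mul_left _)).add
        ((hRemO _).const_mul_left _))
    have hev : (fun h : ℝ => mixedOneStepError s u lam tn x0 h 1
        - (lam^3/4) * h^2 * iteratedDeriv 2 (s tn) (x0 + h))
        =ᶠ[𝓝[>] (0:ℝ)] (fun h : ℝ =>
          (-((lam^3/4) * h^2 * (iteratedDeriv 2 (s tn) (x0 + 1*h)
            - iteratedDeriv 2 (s tn) x0)))
          + (1/h) * ( (-(lam/4)) * Rem (-1/2 - lam) h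
                    + (-(lam/4)) * Rem (-1/2) h
                    + (1 : ℝ) * Rem (1/2 - lam) h
                    + (-1 + lam/2 + lam^2/2) * Rem (1/2) h
                    + (-1 + lam/4) * Rem (3/2 - lam) h
                    + (1 + lam/4 - lam^2) * Rem (3/2) h
                    + (-(lam/2) + lam^2/2) * Rem (5/2) h )) := by
      filter_upwards [self_mem_nhdsWithin] with h hh
      rw [key h hh]
      have hx : x0 + 1*h = x0 + h := by ring
      rw [hx, ← hD3]
      ring
    exact hev.trans_isBigO (((hpert 1).neg_left).add (hdiv _ hS))
end

section
/- Replacing the explicit-Euler predictor in the explicit trapezoidal (Heun) Runge–Kutta method by the explicit midpoint predictor yields a method whose increment matches the implicit trapezoidal rule to third order: for y' = g(y) with g smooth, if y^(1) = y^n + Δt·g(y^n + (Δt/2)g(y^n)) and y^{n+1}_{exp} = y^n + (Δt/2)[g(y^n) + g(y^(1))], while y^{n+1}_{imp} solves y = y^n + (Δt/2)[g(y^n) + g(y)], then y^{n+1}_{exp} - y^{n+1}_{imp} = O(Δt⁴). -/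
/-!
Write `z` for the implicit trapezoidal step, `q = yⁿ + Δt g(yⁿ)` for the Euler point and
`p = yⁿ + (Δt/2) g(yⁿ)` for the midpoint. Since `z - yⁿ = O(Δt)` and `g` is locally Lipschitz,
the trapezoidal equation gives `q - z = (Δt/2)(g(yⁿ) - g(z)) = O(Δt²)`. The midpoint predictor
`y⁽¹⁾ = yⁿ + Δt g(p)` satisfies
`y⁽¹⁾ - z = (Δt/2)[(2 g(p) - g(yⁿ) - g(q)) + (g(q) - g(z))]`,
and the first bracket is a second difference of `g` with step `(Δt/2) g(yⁿ)`, hence `O(Δt²)` by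
Taylor's theorem. So `y⁽¹⁾ - z = O(Δt³)`, and the corrector gives
`y_exp - z = (Δt/2)(g(y⁽¹⁾) - g(z)) = O(Δt⁴)`.
-/

open Filter Asymptotics Topology

theorem HasStrictFDerivAt.isBigO_comp_sub_comp {𝕜 E F α : Type*} [NontriviallyNormedField 𝕜]
    [NormedAddCommGroup E] [NormedSpace 𝕜 E] [NormedAddCommGroup F] [NormedSpace 𝕜 F]
    {f : E → F} {f' : E →L[𝕜] F} {x : E} (hf : HasStrictFDerivAt f f' x) {l : Filter α}
    {u v : α → E} (hu : Tendsto u l (𝓝 x)) (hv : Tendsto v l (𝓝 x)) :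
    (fun t => f (u t) - f (v t)) =O[l] fun t => u t - v t :=
  hf.isBigO_sub.comp_tendsto (hu.prodMk_nhds hv)

theorem Asymptotics.IsBigO.half_mul_pow_succ {l : Filter ℝ} {e : ℝ → ℝ} {n : ℕ}
    (he : e =O[l] fun t => t ^ n) : (fun t => t / 2 * e t) =O[l] fun t => t ^ (n + 1) :=
  ((isBigO_of_le l fun t => by simp).mul he).congr_right fun t => (pow_succ' t n).symm

section SecondDifference

variable {E : Type*} [NormedAddCommGroup E] [NormedSpace ℝ E]

theorem taylorWithinEval_two_univ (f : ℝ → E) (x y : ℝ) :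
    taylorWithinEval f 2 Set.univ x y =
      f x + (y - x) • deriv f x + ((y - x) ^ 2 / 2) • deriv (deriv f) x := by
  simp [taylorWithinEval_succ, iteratedDerivWithin_univ, iteratedDeriv_succ]
  norm_num [div_eq_inv_mul]

theorem ContDiff.isBigO_second_difference {f : ℝ → E} (hf : ContDiff ℝ 2 f) (x : ℝ) :
    (fun h => f (x + 2 * h) - 2 • f (x + h) + f x) =O[𝓝 0] fun h => h ^ 2 := by
  set R := fun y => f y - taylorWithinEval f 2 Set.univ x y
  have hR : R =O[𝓝 x] fun y => (y - x) ^ 2 := (taylor_isLittleO_univ hf).isBigO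
  have hR_scaled (c : ℝ) : (fun h => R (x + c * h)) =O[𝓝 0] fun h : ℝ => h ^ 2 := by
    have hlim : Tendsto (fun h : ℝ => x + c * h) (𝓝 0) (𝓝 x) :=
      (show Continuous fun h : ℝ => x + c * h by fun_prop).tendsto' 0 x (by simp)
    refine (hR.comp_tendsto hlim).trans ?_
    simpa [Function.comp_def, mul_pow] using
      (isBigO_refl (fun h : ℝ => h ^ 2) _).const_mul_left (c ^ 2)
  -- the constant and linear Taylor terms cancel in the second difference
  have hsplit : (fun h => f (x + 2 * h) - 2 • f (x + h) + f x) =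
      fun h => R (x + 2 * h) - (R (x + 1 * h) + R (x + 1 * h)) + h ^ 2 • deriv (deriv f) x := by
    ext h
    simp only [R, taylorWithinEval_two_univ, two_nsmul, one_mul]
    module
  rw [hsplit]
  refine ((hR_scaled 2).sub ((hR_scaled 1).add (hR_scaled 1))).add ?_
  exact .of_bound ‖deriv (deriv f) x‖ (.of_forall fun h => by rw [norm_smul, mul_comm])

end SecondDifference

theorem ContDiff.isBigO_midpoint_second_difference {f : ℝ → ℝ} (hf : ContDiff ℝ 2 f) (y v : ℝ) :
    (fun h => 2 * f (y + h / 2 * v) - f y - f (y + h * v)) =O[𝓝 0] fun h => h ^ 2 := by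
  have hstep : Tendsto (fun h => h * (v / 2)) (𝓝 0) (𝓝 0) := by
    simpa using (continuous_mul_const (v / 2)).tendsto 0
  refine (((hf.isBigO_second_difference y).comp_tendsto hstep).neg_left.trans ?_).congr_left
    fun h => ?_
  · exact .of_bound ((v / 2) ^ 2) (.of_forall fun h => by simp [mul_pow, div_pow, mul_comm])
  · rw [Function.comp_apply, show y + 2 * (h * (v / 2)) = y + h * v by ring,
      show y + h * (v / 2) = y + h / 2 * v by ring, two_nsmul]
    ring

/-- Replacing the explicit-Euler predictor in Heun's method by the
explicit midpoint predictor yields a method matching the implicit trapezoidal rule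
to third order: for `y' = g(y)` with `g` C³, if
`y⁽¹⁾ = yⁿ + Δt·g(yⁿ + (Δt/2)g(yⁿ))` and
`y^{n+1}_exp = yⁿ + (Δt/2)[g(yⁿ) + g(y⁽¹⁾)]`, while `y^{n+1}_imp` solves
`y = yⁿ + (Δt/2)[g(yⁿ) + g(y)]` (and stays `O(Δt)`-close to `yⁿ`), then
`y^{n+1}_exp - y^{n+1}_imp = O(Δt⁴)` as `Δt → 0⁺`. -/
theorem midpoint_predictor_trapezoidal_corrector_fourth_order
    (g : ℝ → ℝ) (hg : ContDiff ℝ 3 g) (yn : ℝ)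
    (yimp : ℝ → ℝ) (K δ0 : ℝ) (hδ0 : 0 < δ0)
    (hfix : ∀ Δt : ℝ, 0 < Δt → Δt < δ0 →
      yimp Δt = yn + (Δt/2) * (g yn + g (yimp Δt)))
    (hclose : ∀ Δt : ℝ, 0 < Δt → Δt < δ0 → |yimp Δt - yn| ≤ K * Δt) :
    (fun Δt : ℝ =>
        (yn + (Δt/2) * (g yn + g (yn + Δt * g (yn + (Δt/2) * g yn))))
          - yimp Δt)
      =O[𝓝[>] (0:ℝ)] (fun Δt => Δt^4) := by
  set l := 𝓝[>] (0:ℝ)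
  have hsmall : ∀ᶠ Δt in l, 0 < Δt ∧ Δt < δ0 := Ioo_mem_nhdsGT hδ0
  have hfix' : ∀ᶠ Δt in l, yimp Δt = yn + Δt / 2 * (g yn + g (yimp Δt)) :=
    hsmall.mono fun Δt h => hfix Δt h.1 h.2
  have hlim {u : ℝ → ℝ} (hu : Continuous u) (h0 : u 0 = yn) : Tendsto u l (𝓝 yn) :=
    tendsto_nhdsWithin_of_tendsto_nhds (h0 ▸ hu.tendsto 0)
  have hlip {u v : ℝ → ℝ} (hu : Tendsto u l (𝓝 yn)) (hv : Tendsto v l (𝓝 yn)) :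
      (fun Δt => g (u Δt) - g (v Δt)) =O[l] fun Δt => u Δt - v Δt :=
    (hg.contDiffAt.hasStrictDerivAt (by norm_num)).hasStrictFDerivAt.isBigO_comp_sub_comp hu hv
  have hz : (fun Δt => yimp Δt - yn) =O[l] fun Δt => Δt :=
    .of_bound K (hsmall.mono fun Δt ⟨hpos, hlt⟩ => by
      simpa [abs_of_pos hpos] using hclose Δt hpos hlt)
  have hz_lim : Tendsto yimp l (𝓝 yn) :=
    tendsto_sub_nhds_zero_iff.1 (hz.trans_tendsto (tendsto_nhdsWithin_of_tendsto_nhds tendsto_id))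
  have hgz : (fun Δt => g yn - g (yimp Δt)) =O[l] fun Δt => Δt ^ 1 := by
    simpa using ((hlip hz_lim tendsto_const_nhds).trans hz).neg_left
  have hqz : (fun Δt => g (yn + Δt * g yn) - g (yimp Δt)) =O[l] fun Δt => Δt ^ 2 :=
    (hlip (hlim (by fun_prop) (by simp)) hz_lim).trans <|
      EventuallyEq.trans_isBigO (hfix'.mono fun Δt h => by linear_combination -h)
        hgz.half_mul_pow_succ
  have hmid : (fun Δt => 2 * g (yn + Δt / 2 * g yn) - g yn - g (yn + Δt * g yn)) =O[l]
      fun Δt => Δt ^ 2 :=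
    ((hg.of_le (by norm_num)).isBigO_midpoint_second_difference yn (g yn)).mono
      nhdsWithin_le_nhds
  have hy1z : (fun Δt => yn + Δt * g (yn + Δt / 2 * g yn) - yimp Δt) =O[l] fun Δt => Δt ^ 3 :=
    EventuallyEq.trans_isBigO (hfix'.mono fun Δt h => by linear_combination -h)
      (hmid.add hqz).half_mul_pow_succ
  exact EventuallyEq.trans_isBigO (hfix'.mono fun Δt h => by linear_combination -h)
    ((hlip (hlim (by fun_prop) (by simp)) hz_lim).trans hy1z).half_mul_pow_succ
end
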